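/- For every natural number n, the torus board (4+2n)′×3′ does not admit a fault-free domino tiling. -/

import Mathlib

/-!
Some domino crosses the vertical line after column 0, say `{(i,0),(i,1)}`. The horizontal lines
just above and just below row `i` must both be crossed, and with only three columns the crossing
dominoes can only leave row `i` from the cell `(i,2)`. So `(i,2)` would have to be paired with
both `(i-1,2)` and `(i+1,2)`, which are different cells once `2 ≠ 0` in `ZMod a`.
-/

/-- Adjacency on the torus board `a′ × b′`: cells `(i,j)` and `(i+1,j)` with
addition in `ZMod a` (vertical neighbors, wrapping around) or `(i,j)` and
`(i,j+1)` with addition in `ZMod b` (horizontal neighbors, wrapping around). -/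
def torAdj (a b : ℕ) (c d : ZMod a × ZMod b) : Prop :=
  (c.2 = d.2 ∧ (d.1 = c.1 + 1 ∨ c.1 = d.1 + 1)) ∨
  (c.1 = d.1 ∧ (d.2 = c.2 + 1 ∨ c.2 = d.2 + 1))

/-- A tiling of the torus board: a set of dominoes (unordered pairs of adjacent
cells) such that every cell belongs to exactly one domino. -/
def torIsTiling (a b : ℕ) (T : Set (Sym2 (ZMod a × ZMod b))) : Prop :=
  (∀ p ∈ T, ∃ c d, torAdj a b c d ∧ p = s(c, d)) ∧
  (∀ x : ZMod a × ZMod b, ∃! p, p ∈ T ∧ x ∈ p)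

/-- A tiling of the torus board is fault-free if every horizontal fault-line
(between rows `i` and `i+1`, for `i : ZMod a`) and every vertical fault-line
(between columns `j` and `j+1`, for `j : ZMod b`) is crossed by some domino. -/
def torFaultFree (a b : ℕ) (T : Set (Sym2 (ZMod a × ZMod b))) : Prop :=
  (∀ i : ZMod a, ∃ j : ZMod b, s((i, j), (i + 1, j)) ∈ T) ∧
  (∀ j : ZMod b, ∃ i : ZMod a, s((i, j), (i, j + 1)) ∈ T)

/-- The torus board `a′ × b′` admits a fault-free domino tiling. -/
def torFaultFreeTileable (a b : ℕ) : Prop :=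
  ∃ T : Set (Sym2 (ZMod a × ZMod b)), torIsTiling a b T ∧ torFaultFree a b T

theorem eq_of_mk_mem_of_mk_mem {α : Type*} {T : Set (Sym2 α)}
    (hT : ∀ x, ∃! p, p ∈ T ∧ x ∈ p) {x y z : α} (hy : s(x, y) ∈ T) (hz : s(x, z) ∈ T) :
    y = z :=
  Sym2.congr_right.mp ((hT x).unique ⟨hy, Sym2.mem_mk_left _ _⟩ ⟨hz, Sym2.mem_mk_left _ _⟩)

theorem torIsTiling.col_eq_two_of_mk_mem {a : ℕ} {T : Set (Sym2 (ZMod a × ZMod 3))}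
    (hT : torIsTiling a 3 T) {i : ZMod a} (hrow : s((i, 0), (i, 1)) ∈ T)
    {j : ZMod 3} {y : ZMod a × ZMod 3} (hy : s((i, j), y) ∈ T) (hyi : y.1 ≠ i) : j = 2 := by
  fin_cases j
  · exact absurd (congrArg Prod.fst (eq_of_mk_mem_of_mk_mem hT.2 hy hrow)) hyi
  · rw [Sym2.eq_swap] at hrow
    exact absurd (congrArg Prod.fst (eq_of_mk_mem_of_mk_mem hT.2 hy hrow)) hyi
  · rfl

theorem not_torFaultFreeTileable_three {a : ℕ} (h2 : (2 : ZMod a) ≠ 0) :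
    ¬ torFaultFreeTileable a 3 := by
  rintro ⟨T, hT, hhor, hver⟩
  have h1 : (1 : ZMod a) ≠ 0 := fun h ↦ h2 (by rw [← one_add_one_eq_two, h, add_zero])
  obtain ⟨i, hrow⟩ := hver 0
  rw [zero_add] at hrow
  obtain ⟨j, hbelow⟩ := hhor i
  obtain ⟨j', habove⟩ := hhor (i - 1)
  rw [sub_add_cancel, Sym2.eq_swap] at habove
  obtain rfl : j = 2 := hT.col_eq_two_of_mk_mem hrow hbelow (by simpa using h1)
  obtain rfl : j' = 2 := hT.col_eq_two_of_mk_mem hrow habove (by simpa using h1)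
  have hrows : i + 1 = i - 1 := congrArg Prod.fst (eq_of_mk_mem_of_mk_mem hT.2 hbelow habove)
  exact h2 (by linear_combination hrows)

/-- For every natural number `n`, the torus board `(4+2n)′ × 3′` does not admit
a fault-free domino tiling. -/
theorem tor_not_faultFree_42n'3' :
    ∀ n : ℕ, ¬ torFaultFreeTileable (4 + 2 * n) 3 := by
  intro n
  apply not_torFaultFreeTileable_three
  intro h
  have hdvd := (ZMod.natCast_eq_zero_iff 2 (4 + 2 * n)).mp (by exact_mod_cast h)
  have := Nat.le_of_dvd two_pos hdvd
  omega
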